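/- Let A = [[M, N], [N*, P]] be a 2n×2n Hermitian positive definite matrix with n×n blocks. Then the Schur complement S = M - N·P⁻¹·N* is Hermitian positive definite, and its eigenvalues interlace those of A: λ_k(A) ≤ λ_k(S) ≤ λ_{k+n}(A) for k = 1, …, n. -/

import Mathlib

open Matrix ComplexOrder

/-- Eigenvalues of a Hermitian matrix listed in increasing order. -/
noncomputable def sortedEigs {m : ℕ} {𝕜 : Type*} [RCLike 𝕜] {A : Matrix (Fin m) (Fin m) 𝕜}
    (hA : A.IsHermitian) : Fin m → ℝ :=
  hA.eigenvalues ∘ Tuple.sort hA.eigenvalues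

/-!
Restricting the quadratic form of `A` to the graph `{(u, -P⁻¹N*u)}` gives the quadratic form of the
Schur complement `S`, so `S` is positive definite. Both inequalities come from one comparison
principle of Courant–Fischer type: if an injective linear map `L` satisfies
`R_A(L u) ≤ R_S(u)` for the Rayleigh quotients, then `λ_k(A) ≤ λ_k(S)`; indeed `L` maps the span
of the first `k + 1` eigenvectors of `S` onto a space meeting the orthogonal complement of the first
`k` eigenvectors of `A`. The graph map qualifies because `‖L u‖ ≥ ‖u‖` and `S ≥ 0`. The upper bound
is the same principle applied to `-A` and `-S` with the inclusion `u ↦ (u, 0)`, using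
`⟪u, S u⟫ ≤ ⟪u, M u⟫`.
-/

open Module RCLike InnerProductSpace

section Eigenbasis

variable {𝕜 E : Type*} [RCLike 𝕜] [NormedAddCommGroup E] [InnerProductSpace 𝕜 E]

lemma OrthonormalBasis.re_inner_apply_self_eq_sum {ι : Type*} [Fintype ι]
    (b : OrthonormalBasis ι 𝕜 E) {T : E →ₗ[𝕜] E} {μ : ι → ℝ}
    (hb : ∀ i, T (b i) = (μ i : 𝕜) • b i) (x : E) :
    re ⟪x, T x⟫_𝕜 = ∑ i, μ i * ‖⟪b i, x⟫_𝕜‖ ^ 2 := by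
  have hTx : T x = ∑ i, (⟪b i, x⟫_𝕜 * μ i) • b i := by
    conv_lhs => rw [← b.sum_repr' x]
    simp only [map_sum, map_smul, hb, smul_smul]
  rw [hTx, inner_sum, map_sum]
  refine Finset.sum_congr rfl fun i _ => ?_
  rw [inner_smul_right, ← inner_conj_symm x (b i), mul_right_comm, RCLike.mul_conj]
  norm_cast
  ring

variable {m : ℕ} (b : OrthonormalBasis (Fin m) 𝕜 E) {T : E →ₗ[𝕜] E} {μ : Fin m → ℝ}
  (hb : ∀ i, T (b i) = (μ i : 𝕜) • b i) (hμ : Monotone μ)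
include hb hμ

lemma OrthonormalBasis.mul_norm_sq_le_re_inner_apply_self {i : Fin m} {x : E}
    (hx : ∀ k < i, ⟪b k, x⟫_𝕜 = 0) : μ i * ‖x‖ ^ 2 ≤ re ⟪x, T x⟫_𝕜 := by
  rw [b.re_inner_apply_self_eq_sum hb, ← b.sum_sq_norm_inner_right, Finset.mul_sum]
  refine Finset.sum_le_sum fun k _ => ?_
  rcases lt_or_ge k i with hki | hik
  · simp [hx k hki]
  · exact mul_le_mul_of_nonneg_right (hμ hik) (by positivity)

lemma OrthonormalBasis.re_inner_apply_self_le_mul_norm_sq {i : Fin m} {x : E}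
    (hx : ∀ k, i < k → ⟪b k, x⟫_𝕜 = 0) : re ⟪x, T x⟫_𝕜 ≤ μ i * ‖x‖ ^ 2 := by
  rw [b.re_inner_apply_self_eq_sum hb, ← b.sum_sq_norm_inner_right, Finset.mul_sum]
  refine Finset.sum_le_sum fun k _ => ?_
  rcases lt_or_ge i k with hik | hki
  · simp [hx k hik]
  · exact mul_le_mul_of_nonneg_right (hμ hki) (by positivity)

end Eigenbasis

lemma exists_ne_zero_forall_inner_eq_zero {𝕜 E F : Type*} [RCLike 𝕜]
    [NormedAddCommGroup E] [InnerProductSpace 𝕜 E]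
    [NormedAddCommGroup F] [InnerProductSpace 𝕜 F] [FiniteDimensional 𝕜 F]
    {ι κ : Type*} [Fintype ι] [Fintype κ] (L : F →ₗ[𝕜] E) (e : ι → E) (f : κ → F)
    (h : Fintype.card ι + Fintype.card κ < finrank 𝕜 F) :
    ∃ u ≠ 0, (∀ i, ⟪e i, L u⟫_𝕜 = 0) ∧ ∀ k, ⟪f k, u⟫_𝕜 = 0 := by
  let Φ : F →ₗ[𝕜] (ι → 𝕜) × (κ → 𝕜) :=
    (LinearMap.pi fun i => innerₛₗ 𝕜 (e i) ∘ₗ L).prod (LinearMap.pi fun k => innerₛₗ 𝕜 (f k))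
  have hΦ : LinearMap.ker Φ ≠ ⊥ := LinearMap.ker_ne_bot_of_finrank_lt (by simpa using h)
  obtain ⟨u, hu, hu0⟩ := Submodule.exists_mem_ne_zero_of_ne_bot hΦ
  simp only [LinearMap.ker_prod, Submodule.mem_inf, LinearMap.mem_ker, funext_iff,
    LinearMap.pi_apply, LinearMap.coe_comp, Function.comp_apply, Pi.zero_apply,
    innerₛₗ_apply_apply, Φ] at hu
  exact ⟨u, hu0, hu⟩

section Comparison

variable {𝕜 E F : Type*} [RCLike 𝕜] [NormedAddCommGroup E] [InnerProductSpace 𝕜 E]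
  [NormedAddCommGroup F] [InnerProductSpace 𝕜 F] {m p : ℕ}
  (b : OrthonormalBasis (Fin m) 𝕜 E) (c : OrthonormalBasis (Fin p) 𝕜 F)
  {T : E →ₗ[𝕜] E} {T' : F →ₗ[𝕜] F} {μ : Fin m → ℝ} {ν : Fin p → ℝ}
  (hb : ∀ i, T (b i) = (μ i : 𝕜) • b i) (hμ : Monotone μ)
  (hc : ∀ j, T' (c j) = (ν j : 𝕜) • c j) (hν : Monotone ν)
  {L : F →ₗ[𝕜] E} (hL : Function.Injective L)
include hb hμ hc hν hL

theorem eigenvalue_le_of_rayleigh_le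
    (hR : ∀ u, re ⟪L u, T (L u)⟫_𝕜 * ‖u‖ ^ 2 ≤ re ⟪u, T' u⟫_𝕜 * ‖L u‖ ^ 2)
    {i : Fin m} {j : Fin p} (hij : (i : ℕ) = j) : μ i ≤ ν j := by
  have := c.toBasis.finiteDimensional_of_finite
  have hcard : Fintype.card (Set.Iio i) + Fintype.card (Set.Ioi j) < finrank 𝕜 F := by
    rw [Fintype.card_Iio, Fintype.card_Ioi, Fin.card_Iio, Fin.card_Ioi,
      finrank_eq_card_basis c.toBasis, Fintype.card_fin]
    omega
  obtain ⟨u, hu0, hLu, hu⟩ := exists_ne_zero_forall_inner_eq_zero L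
    (fun k : Set.Iio i => b k) (fun k : Set.Ioi j => c k) hcard
  have hlow : μ i * ‖L u‖ ^ 2 ≤ re ⟪L u, T (L u)⟫_𝕜 :=
    b.mul_norm_sq_le_re_inner_apply_self hb hμ fun k hk => hLu ⟨k, hk⟩
  have hup : re ⟪u, T' u⟫_𝕜 ≤ ν j * ‖u‖ ^ 2 :=
    c.re_inner_apply_self_le_mul_norm_sq hc hν fun k hk => hu ⟨k, hk⟩
  have hLu0 : 0 < ‖L u‖ ^ 2 := by
    have : L u ≠ 0 := (map_ne_zero_iff L hL).2 hu0
    positivity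
  have hu0' : 0 < ‖u‖ ^ 2 := by positivity
  refine le_of_mul_le_mul_right ?_ (mul_pos hLu0 hu0')
  calc μ i * (‖L u‖ ^ 2 * ‖u‖ ^ 2)
      ≤ re ⟪L u, T (L u)⟫_𝕜 * ‖u‖ ^ 2 := by
        rw [← mul_assoc]; exact mul_le_mul_of_nonneg_right hlow hu0'.le
    _ ≤ re ⟪u, T' u⟫_𝕜 * ‖L u‖ ^ 2 := hR u
    _ ≤ ν j * (‖L u‖ ^ 2 * ‖u‖ ^ 2) := by
        rw [mul_left_comm, mul_comm]; exact mul_le_mul_of_nonneg_left hup hLu0.le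

theorem le_eigenvalue_of_le_rayleigh
    (hR : ∀ u, re ⟪u, T' u⟫_𝕜 * ‖L u‖ ^ 2 ≤ re ⟪L u, T (L u)⟫_𝕜 * ‖u‖ ^ 2)
    {i : Fin m} {j : Fin p} (hij : (i : ℕ) + p = j + m) : ν j ≤ μ i := by
  have key := eigenvalue_le_of_rayleigh_le (b.reindex Fin.revPerm) (c.reindex Fin.revPerm)
    (T := -T) (T' := -T') (μ := fun k => -μ k.rev) (ν := fun k => -ν k.rev)
    (fun k => by simp [hb]) (fun k l hkl => neg_le_neg (hμ (Fin.rev_le_rev.2 hkl)))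
    (fun k => by simp [hc]) (fun k l hkl => neg_le_neg (hν (Fin.rev_le_rev.2 hkl))) hL
    (fun u => by simpa [inner_neg_right] using hR u) (i := i.rev) (j := j.rev)
    (by simp only [Fin.val_rev]; omega)
  simpa using key

end Comparison

section Matrix

open WithLp

variable {𝕜 : Type*} [RCLike 𝕜] {m p : ℕ}

noncomputable def sortedEigenvectorBasis {X : Matrix (Fin m) (Fin m) 𝕜} (hX : X.IsHermitian) :
    OrthonormalBasis (Fin m) 𝕜 (EuclideanSpace 𝕜 (Fin m)) :=
  hX.eigenvectorBasis.reindex (Tuple.sort hX.eigenvalues).symm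

lemma toEuclideanLin_sortedEigenvectorBasis {X : Matrix (Fin m) (Fin m) 𝕜}
    (hX : X.IsHermitian) (i : Fin m) :
    toEuclideanLin X (sortedEigenvectorBasis hX i) =
      (sortedEigs hX i : 𝕜) • sortedEigenvectorBasis hX i := by
  rw [sortedEigenvectorBasis, OrthonormalBasis.reindex_apply, Equiv.symm_symm, toLpLin_apply,
    hX.mulVec_eigenvectorBasis]
  ext1
  simp only [PiLp.smul_apply, Pi.smul_apply, smul_eq_mul, sortedEigs, Function.comp_apply,
    RCLike.real_smul_eq_coe_mul]

lemma monotone_sortedEigs {X : Matrix (Fin m) (Fin m) 𝕜} (hX : X.IsHermitian) :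
    Monotone (sortedEigs hX) :=
  Tuple.monotone_sort _

lemma re_inner_toEuclideanLin (X : Matrix (Fin m) (Fin m) 𝕜) (x : EuclideanSpace 𝕜 (Fin m)) :
    re ⟪x, toEuclideanLin X x⟫_𝕜 = re (star (ofLp x) ⬝ᵥ X *ᵥ ofLp x) := by
  rw [EuclideanSpace.inner_eq_star_dotProduct, dotProduct_comm, ofLp_toLpLin, toLin'_apply]

lemma EuclideanSpace.norm_sq_eq_re_dotProduct (x : EuclideanSpace 𝕜 (Fin m)) :
    ‖x‖ ^ 2 = re (star (ofLp x) ⬝ᵥ ofLp x) := by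
  rw [@norm_sq_eq_re_inner 𝕜, EuclideanSpace.inner_eq_star_dotProduct, dotProduct_comm]

variable {X : Matrix (Fin m) (Fin m) 𝕜} {Y : Matrix (Fin p) (Fin p) 𝕜}
  (hX : X.IsHermitian) (hY : Y.IsHermitian)
  {L : (Fin p → 𝕜) →ₗ[𝕜] (Fin m → 𝕜)} (hL : Function.Injective L)
include hL

theorem sortedEigs_le_of_rayleigh_le
    (hR : ∀ u, re (star (L u) ⬝ᵥ X *ᵥ L u) * re (star u ⬝ᵥ u) ≤
      re (star u ⬝ᵥ Y *ᵥ u) * re (star (L u) ⬝ᵥ L u))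
    {i : Fin m} {j : Fin p} (hij : (i : ℕ) = j) : sortedEigs hX i ≤ sortedEigs hY j :=
  eigenvalue_le_of_rayleigh_le (sortedEigenvectorBasis hX) (sortedEigenvectorBasis hY)
    (toEuclideanLin_sortedEigenvectorBasis hX) (monotone_sortedEigs hX)
    (toEuclideanLin_sortedEigenvectorBasis hY) (monotone_sortedEigs hY)
    (L := (WithLp.linearEquiv 2 𝕜 _).symm.arrowCongr (WithLp.linearEquiv 2 𝕜 _).symm L)
    ((WithLp.linearEquiv 2 𝕜 _).symm.injective.comp
      (hL.comp (WithLp.linearEquiv 2 𝕜 _).injective))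
    (fun u => by
      simp only [re_inner_toEuclideanLin, EuclideanSpace.norm_sq_eq_re_dotProduct]
      exact hR (ofLp u))
    hij

theorem sortedEigs_le_of_le_rayleigh
    (hR : ∀ u, re (star u ⬝ᵥ Y *ᵥ u) * re (star (L u) ⬝ᵥ L u) ≤
      re (star (L u) ⬝ᵥ X *ᵥ L u) * re (star u ⬝ᵥ u))
    {i : Fin m} {j : Fin p} (hij : (i : ℕ) + p = j + m) : sortedEigs hY j ≤ sortedEigs hX i :=
  le_eigenvalue_of_le_rayleigh (sortedEigenvectorBasis hX) (sortedEigenvectorBasis hY)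
    (toEuclideanLin_sortedEigenvectorBasis hX) (monotone_sortedEigs hX)
    (toEuclideanLin_sortedEigenvectorBasis hY) (monotone_sortedEigs hY)
    (L := (WithLp.linearEquiv 2 𝕜 _).symm.arrowCongr (WithLp.linearEquiv 2 𝕜 _).symm L)
    ((WithLp.linearEquiv 2 𝕜 _).symm.injective.comp
      (hL.comp (WithLp.linearEquiv 2 𝕜 _).injective))
    (fun u => by
      simp only [re_inner_toEuclideanLin, EuclideanSpace.norm_sq_eq_re_dotProduct]
      exact hR (ofLp u))
    hij

end Matrix

section GraphMap

variable {𝕜 : Type*} [RCLike 𝕜] {ι m n : Type*} [Fintype m]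

def Matrix.graphLinearMap (W : Matrix n m 𝕜) (e : ι ≃ m ⊕ n) : (m → 𝕜) →ₗ[𝕜] (ι → 𝕜) where
  toFun u := (u ⊕ᵥ W *ᵥ u) ∘ e
  map_add' u v := by
    funext i
    simp only [Function.comp_apply, Pi.add_apply]
    rcases e i with k | k <;> simp [mulVec_add]
  map_smul' c u := by
    funext i
    simp only [Function.comp_apply, Pi.smul_apply]
    rcases e i with k | k <;> simp [mulVec_smul]

variable (W : Matrix n m 𝕜) (e : ι ≃ m ⊕ n)

lemma Matrix.graphLinearMap_apply (u : m → 𝕜) : graphLinearMap W e u = (u ⊕ᵥ W *ᵥ u) ∘ e := rfl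

lemma Matrix.graphLinearMap_injective : Function.Injective (graphLinearMap W e) := by
  intro u v h
  funext k
  simpa [graphLinearMap_apply] using congrFun h (e.symm (Sum.inl k))

variable [Fintype ι] [Fintype n]

lemma Matrix.star_graphLinearMap_dotProduct_self (u : m → 𝕜) :
    star (graphLinearMap W e u) ⬝ᵥ graphLinearMap W e u =
      star u ⬝ᵥ u + star (W *ᵥ u) ⬝ᵥ W *ᵥ u := by
  change star (u ⊕ᵥ W *ᵥ u) ∘ e ⬝ᵥ (u ⊕ᵥ W *ᵥ u) ∘ e = _
  rw [comp_equiv_dotProduct_comp_equiv, Function.star_sumElim, sumElim_dotProduct_sumElim]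

lemma Matrix.star_graphLinearMap_dotProduct_submatrix_mulVec (B : Matrix (m ⊕ n) (m ⊕ n) 𝕜)
    (u : m → 𝕜) :
    star (graphLinearMap W e u) ⬝ᵥ B.submatrix e e *ᵥ graphLinearMap W e u =
      star (u ⊕ᵥ W *ᵥ u) ⬝ᵥ B *ᵥ (u ⊕ᵥ W *ᵥ u) := by
  change star (u ⊕ᵥ W *ᵥ u) ∘ e ⬝ᵥ B.submatrix e e *ᵥ ((u ⊕ᵥ W *ᵥ u) ∘ e) = _
  rw [submatrix_mulVec_equiv, comp_equiv_dotProduct_comp_equiv]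
  simp [Function.comp_def]

end GraphMap

section SchurComplement

variable {𝕜 : Type*} [RCLike 𝕜] {ι m n : Type*}

lemma re_star_dotProduct_self_nonneg [Fintype ι] (x : ι → 𝕜) : 0 ≤ re (star x ⬝ᵥ x) := by
  simpa [dotProduct_comm] using (RCLike.nonneg_iff.1 (dotProduct_star_self_nonneg x)).1

lemma Matrix.PosSemidef.re_dotProduct_mulVec_nonneg [Fintype ι] {X : Matrix ι ι 𝕜}
    (hX : X.PosSemidef) (x : ι → 𝕜) : 0 ≤ re (star x ⬝ᵥ X *ᵥ x) :=
  (RCLike.nonneg_iff.1 (hX.dotProduct_mulVec_nonneg x)).1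

lemma Matrix.PosDef.fromBlocks_block₂₂ {A : Matrix m m 𝕜} {B : Matrix m n 𝕜} {C : Matrix n m 𝕜}
    {D : Matrix n n 𝕜} (h : (fromBlocks A B C D).PosDef) : D.PosDef :=
  h.submatrix Sum.inr_injective

variable [Fintype m] [Fintype n] (M : Matrix m m 𝕜) (N : Matrix m n 𝕜) {P : Matrix n n 𝕜}

lemma Matrix.star_sumElim_zero_dotProduct_fromBlocks_mulVec (C : Matrix n m 𝕜) (x : m → 𝕜) :
    star (x ⊕ᵥ 0) ⬝ᵥ fromBlocks M N C P *ᵥ (x ⊕ᵥ 0) = star x ⬝ᵥ M *ᵥ x := by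
  simp [Function.star_sumElim, fromBlocks_mulVec, sumElim_dotProduct_sumElim]

variable [DecidableEq n]

lemma Matrix.star_graph_dotProduct_fromBlocks_mulVec [Invertible P] (hP : P.IsHermitian)
    (x : m → 𝕜) :
    star (x ⊕ᵥ -(P⁻¹ * Nᴴ) *ᵥ x) ⬝ᵥ fromBlocks M N Nᴴ P *ᵥ (x ⊕ᵥ -(P⁻¹ * Nᴴ) *ᵥ x) =
      star x ⬝ᵥ (M - N * P⁻¹ * Nᴴ) *ᵥ x := by
  rw [dotProduct_mulVec, schur_complement_eq₂₂ M N _ _ hP, neg_mulVec, add_neg_cancel,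
    star_zero, zero_vecMul, zero_dotProduct, zero_add, dotProduct_mulVec]

lemma Matrix.PosDef.re_dotProduct_schurComplement_le (hP : P.PosDef) (x : m → 𝕜) :
    re (star x ⬝ᵥ (M - N * P⁻¹ * Nᴴ) *ᵥ x) ≤ re (star x ⬝ᵥ M *ᵥ x) := by
  have := hP.isUnit.invertible
  have h := schur_complement_eq₂₂ M N x 0 hP.1
  rw [add_zero, ← dotProduct_mulVec, ← dotProduct_mulVec, ← dotProduct_mulVec,
    star_sumElim_zero_dotProduct_fromBlocks_mulVec] at h
  rw [h, map_add]
  exact le_add_of_nonneg_left (hP.posSemidef.re_dotProduct_mulVec_nonneg _)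

lemma Matrix.PosDef.schurComplement₂₂ {A : Matrix m m 𝕜} {B : Matrix m n 𝕜}
    (h : (fromBlocks A B Bᴴ P).PosDef) : (A - B * P⁻¹ * Bᴴ).PosDef := by
  have hP := h.fromBlocks_block₂₂
  have := hP.isUnit.invertible
  refine .of_dotProduct_mulVec_pos ((IsHermitian.fromBlocks₂₂ A B hP.1).1 h.1) fun x hx => ?_
  rw [← star_graph_dotProduct_fromBlocks_mulVec A B hP.1]
  refine h.dotProduct_mulVec_pos fun h0 => hx (funext fun i => ?_)
  simpa using congrFun h0 (Sum.inl i)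

end SchurComplement

theorem stmt_12_general (n : ℕ) (M N P : Matrix (Fin n) (Fin n) ℂ)
    (A : Matrix (Fin (n + n)) (Fin (n + n)) ℂ)
    (hAdef : A = (Matrix.fromBlocks M N Nᴴ P).submatrix finSumFinEquiv.symm finSumFinEquiv.symm)
    (hA : A.PosDef) :
    ∃ hS : (M - N * P⁻¹ * Nᴴ).PosDef,
      ∀ k : Fin n,
        sortedEigs hA.1 (Fin.castAdd n k) ≤ sortedEigs hS.1 k ∧
        sortedEigs hS.1 k ≤ sortedEigs hA.1 (Fin.natAdd n k) := by
  have hB : (fromBlocks M N Nᴴ P).PosDef := by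
    simpa [hAdef] using hA.submatrix finSumFinEquiv.injective
  have hP := hB.fromBlocks_block₂₂
  have := hP.isUnit.invertible
  have hS := hB.schurComplement₂₂
  refine ⟨hS, fun k => ⟨?_, ?_⟩⟩
  · refine sortedEigs_le_of_rayleigh_le hA.1 hS.1
      (graphLinearMap_injective (-(P⁻¹ * Nᴴ)) finSumFinEquiv.symm) (fun u => ?_) rfl
    rw [hAdef, star_graphLinearMap_dotProduct_submatrix_mulVec,
      star_graph_dotProduct_fromBlocks_mulVec _ _ hP.1, star_graphLinearMap_dotProduct_self,
      map_add]
    exact mul_le_mul_of_nonneg_left (le_add_of_nonneg_right (re_star_dotProduct_self_nonneg _))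
      (hS.posSemidef.re_dotProduct_mulVec_nonneg u)
  · refine sortedEigs_le_of_le_rayleigh hA.1 hS.1
      (graphLinearMap_injective 0 finSumFinEquiv.symm) (fun u => ?_)
      (by simp only [Fin.natAdd_eq_addNat, Fin.val_addNat]; omega)
    rw [hAdef, star_graphLinearMap_dotProduct_submatrix_mulVec, zero_mulVec,
      star_sumElim_zero_dotProduct_fromBlocks_mulVec, star_graphLinearMap_dotProduct_self,
      zero_mulVec, star_zero, zero_dotProduct, add_zero]
    exact mul_le_mul_of_nonneg_right (hP.re_dotProduct_schurComplement_le M N u)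
      (re_star_dotProduct_self_nonneg u)

theorem stmt_12 (n : ℕ) (M N P : Matrix (Fin n) (Fin n) ℂ)
    (hMh : M.IsHermitian) (hPh : P.IsHermitian)
    (A : Matrix (Fin (n + n)) (Fin (n + n)) ℂ)
    (hAdef : A = (Matrix.fromBlocks M N Nᴴ P).submatrix finSumFinEquiv.symm finSumFinEquiv.symm)
    (hA : A.PosDef) :
    ∃ hS : (M - N * P⁻¹ * Nᴴ).PosDef,
      ∀ k : Fin n,
        sortedEigs hA.1 (Fin.castAdd n k) ≤ sortedEigs hS.1 k ∧
        sortedEigs hS.1 k ≤ sortedEigs hA.1 (Fin.natAdd n k) :=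
  stmt_12_general n M N P A hAdef hA
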